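/- arXiv:1609.02062 — 4 statements merged into one kernel-verified Lean document; each statement's English description precedes it below -/
import Mathlib

section
/- Let X, Y and Z be Banach spaces such that Z is a closed subspace of X which is an ideal in X. Then the natural inclusion of Z ⊗ Y into X ⊗ Y is isometric for the projective tensor norms; that is, for every element u of the algebraic tensor product Z ⊗ Y, the projective norm of u computed in Z ⊗̂π Y equals the projective norm of u computed in X ⊗̂π Y, so Z ⊗̂π Y is (canonically isometric to) a closed subspace of X ⊗̂π Y. -/
open scoped TensorProduct
open MeasureTheory UniformSpace
open scoped ENNReal

noncomputable section

/-- The projective tensor norm on the algebraic tensor product `X ⊗[ℝ] Y`: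
`‖u‖_π = inf { ∑ᵢ ‖xᵢ‖ ‖yᵢ‖ : u = ∑ᵢ xᵢ ⊗ yᵢ }`. -/
def projectiveNorm (X Y : Type*) [NormedAddCommGroup X] [NormedSpace ℝ X]
    [NormedAddCommGroup Y] [NormedSpace ℝ Y] (u : X ⊗[ℝ] Y) : ℝ :=
  sInf { r : ℝ | ∃ (n : ℕ) (x : Fin n → X) (y : Fin n → Y),
    u = ∑ i, x i ⊗ₜ[ℝ] y i ∧ r = ∑ i, ‖x i‖ * ‖y i‖ }


/-- A (closed) subspace `Z` of `X` is an ideal in `X`: for each `ε > 0` and each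
finite-dimensional subspace `E ⊆ X` there is a linear map `T : E → Z ⊆ X` fixing `E ∩ Z`
with `‖T e‖ ≤ (1 + ε) ‖e‖`. -/
def IsIdeal {X : Type*} [NormedAddCommGroup X] [NormedSpace ℝ X] (Z : Submodule ℝ X) : Prop :=
  ∀ ε : ℝ, 0 < ε → ∀ E : Submodule ℝ X, FiniteDimensional ℝ E →
    ∃ T : E →ₗ[ℝ] X, (∀ e : E, T e ∈ Z) ∧ (∀ e : E, (e : X) ∈ Z → T e = e) ∧
      ∀ e : E, ‖T e‖ ≤ (1 + ε) * ‖(e : X)‖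

/-!
A representation `∑ xᵢ ⊗ yᵢ` of `u` in `X ⊗ Y` involves only finitely many vectors of `X`. Together
with the `Z`-components of one representation of `u` in `Z ⊗ Y` they span a finite-dimensional
subspace `E`, over which the ideal property gives an almost-contractive `P : E → Z` fixing `E ∩ Z`.
Applying `P ⊗ id` to the lift of `∑ xᵢ ⊗ yᵢ` to `E ⊗ Y` returns `u` and costs at most a factor
`1 + ε` in the projective norm.
-/

open TensorProduct Pointwise

section ProjectiveNorm

variable {X Y W : Type*} [NormedAddCommGroup X] [NormedSpace ℝ X]
  [NormedAddCommGroup Y] [NormedSpace ℝ Y] [NormedAddCommGroup W] [NormedSpace ℝ W]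

theorem projectiveNorm_le_sum {u : X ⊗[ℝ] Y} {n : ℕ} {x : Fin n → X} {y : Fin n → Y}
    (hu : u = ∑ i, x i ⊗ₜ[ℝ] y i) : projectiveNorm X Y u ≤ ∑ i, ‖x i‖ * ‖y i‖ :=
  csInf_le ⟨0, by rintro _ ⟨n, x, y, -, rfl⟩; positivity⟩ ⟨n, x, y, hu, rfl⟩

theorem le_projectiveNorm {u : X ⊗[ℝ] Y} {a : ℝ}
    (h : ∀ (n : ℕ) (x : Fin n → X) (y : Fin n → Y),
      u = ∑ i, x i ⊗ₜ[ℝ] y i → a ≤ ∑ i, ‖x i‖ * ‖y i‖) :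
    a ≤ projectiveNorm X Y u := by
  obtain ⟨n, x, y, hu⟩ := exists_sum_tmul_eq u
  exact le_csInf ⟨_, n, x, y, hu, rfl⟩ (by rintro _ ⟨n, x, y, hu, rfl⟩; exact h n x y hu)

theorem projectiveNorm_rTensor_le (f : X →ₗ[ℝ] W) {C : ℝ} (hC : 0 ≤ C)
    (hf : ∀ x, ‖f x‖ ≤ C * ‖x‖) (u : X ⊗[ℝ] Y) :
    projectiveNorm W Y (f.rTensor Y u) ≤ C * projectiveNorm X Y u := by
  obtain ⟨n, x, y, hu⟩ := exists_sum_tmul_eq u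
  simp only [projectiveNorm]
  rw [← smul_eq_mul, ← Real.sInf_smul_of_nonneg hC]
  refine le_csInf ⟨_, Set.smul_mem_smul_set ⟨n, x, y, hu, rfl⟩⟩ ?_
  rintro _ ⟨_, ⟨n, x, y, rfl, rfl⟩, rfl⟩
  calc projectiveNorm W Y (f.rTensor Y (∑ i, x i ⊗ₜ[ℝ] y i))
      ≤ ∑ i, ‖f (x i)‖ * ‖y i‖ := projectiveNorm_le_sum (by simp [map_sum])
    _ ≤ ∑ i, C * ‖x i‖ * ‖y i‖ := by gcongr with i; exact hf (x i)
    _ = C • ∑ i, ‖x i‖ * ‖y i‖ := by simp only [smul_eq_mul, Finset.mul_sum, mul_assoc]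

end ProjectiveNorm

theorem IsIdeal.projectiveNorm_le_mul_sum {X Y : Type*} [NormedAddCommGroup X] [NormedSpace ℝ X]
    [NormedAddCommGroup Y] [NormedSpace ℝ Y] {Z : Submodule ℝ X} (hZ : IsIdeal Z)
    {u : Z ⊗[ℝ] Y} {n : ℕ} {x : Fin n → X} {y : Fin n → Y}
    (hu : Z.subtype.rTensor Y u = ∑ i, x i ⊗ₜ[ℝ] y i) {c : ℝ} (hc : 1 < c) :
    projectiveNorm Z Y u ≤ c * ∑ i, ‖x i‖ * ‖y i‖ := by
  obtain ⟨m, z, w, rfl⟩ := exists_sum_tmul_eq u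
  set E := Submodule.span ℝ (Set.range x ∪ Set.range (Z.subtype ∘ z))
  have hxE (i : Fin n) : x i ∈ E := Submodule.subset_span (Or.inl ⟨i, rfl⟩)
  have hzE (j : Fin m) : (z j : X) ∈ E := Submodule.subset_span (Or.inr ⟨j, rfl⟩)
  obtain ⟨T, hTZ, hT_fix, hT_norm⟩ := hZ (c - 1) (by linarith) E
    (FiniteDimensional.span_of_finite ℝ ((Set.finite_range x).union (Set.finite_range _)))
  set P : E →ₗ[ℝ] Z := T.codRestrict Z hTZ
  -- tensoring with `Y` over a field preserves the injectivity of `E → X`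
  have hlift : ∑ i, (⟨x i, hxE i⟩ : E) ⊗ₜ[ℝ] y i = ∑ j, (⟨z j, hzE j⟩ : E) ⊗ₜ[ℝ] w j := by
    apply Module.Flat.rTensor_preserves_injective_linearMap E.subtype E.injective_subtype
    simpa [map_sum] using hu.symm
  have hP : ∑ j, z j ⊗ₜ[ℝ] w j = P.rTensor Y (∑ i, (⟨x i, hxE i⟩ : E) ⊗ₜ[ℝ] y i) := by
    rw [hlift, map_sum]
    refine Finset.sum_congr rfl fun j _ => ?_
    rw [LinearMap.rTensor_tmul]
    congr 1
    exact Subtype.ext (hT_fix ⟨z j, hzE j⟩ (z j).2).symm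
  calc projectiveNorm Z Y (∑ j, z j ⊗ₜ[ℝ] w j)
      ≤ c * projectiveNorm E Y (∑ i, (⟨x i, hxE i⟩ : E) ⊗ₜ[ℝ] y i) := by
        rw [hP]
        exact projectiveNorm_rTensor_le P (by linarith) (fun e => by
          simpa [P] using hT_norm e) _
    _ ≤ c * ∑ i, ‖x i‖ * ‖y i‖ := by gcongr; exact projectiveNorm_le_sum rfl

theorem projTensor_of_ideal_isometric_general (X Y : Type*)
    [NormedAddCommGroup X] [NormedSpace ℝ X]
    [NormedAddCommGroup Y] [NormedSpace ℝ Y]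
    (Z : Submodule ℝ X) (hZideal : IsIdeal Z)
    (u : ↥Z ⊗[ℝ] Y) :
    projectiveNorm X Y (TensorProduct.map Z.subtype (LinearMap.id : Y →ₗ[ℝ] Y) u) =
      projectiveNorm (↥Z) Y u := by
  refine le_antisymm ?_ ?_
  · exact (projectiveNorm_rTensor_le Z.subtype zero_le_one (fun z => (one_mul _).ge) u).trans_eq
      (one_mul _)
  · refine le_projectiveNorm fun n x y hu => ?_
    refine (le_iff_forall_one_lt_le_mul₀ (by positivity)).2 fun c hc => ?_
    rw [mul_comm]
    exact hZideal.projectiveNorm_le_mul_sum hu hc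

/-- If `Z` is a closed subspace of a Banach space `X` which is an ideal in `X`, then the natural
inclusion of `Z ⊗ Y` into `X ⊗ Y` is isometric for the projective tensor norms; hence
`Z ⊗̂π Y` is (canonically isometric to) a closed subspace of `X ⊗̂π Y`. -/
theorem projTensor_of_ideal_isometric (X Y : Type*)
    [NormedAddCommGroup X] [NormedSpace ℝ X] [CompleteSpace X]
    [NormedAddCommGroup Y] [NormedSpace ℝ Y] [CompleteSpace Y]
    (Z : Submodule ℝ X) (hZclosed : IsClosed (Z : Set X)) (hZideal : IsIdeal Z)
    (u : ↥Z ⊗[ℝ] Y) :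
    projectiveNorm X Y (TensorProduct.map Z.subtype (LinearMap.id : Y →ₗ[ℝ] Y) u) =
      projectiveNorm (↥Z) Y u :=
  projTensor_of_ideal_isometric_general X Y Z hZideal u
end
end

section
/- The norms of the real Banach spaces c_0 and ℓ_∞ are alternatively octahedral, but neither c_0 nor ℓ_∞ has an octahedral norm. -/
open scoped TensorProduct
open MeasureTheory UniformSpace
open scoped ENNReal

noncomputable section

/-- The norm of `X` is octahedral: for every finite-dimensional subspace `E` of `X` and every
`ε > 0` there exists `y` in the unit sphere such that
`‖x + l • y‖ ≥ (1 - ε)(‖x‖ + |l|)` for every `x ∈ E` and every `l : ℝ`. -/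
def OctahedralNorm (X : Type*) [NormedAddCommGroup X] [NormedSpace ℝ X] : Prop :=
  ∀ (E : Submodule ℝ X), FiniteDimensional ℝ E → ∀ ε : ℝ, 0 < ε →
    ∃ y : X, ‖y‖ = 1 ∧ ∀ x ∈ E, ∀ l : ℝ, (1 - ε) * (‖x‖ + |l|) ≤ ‖x + l • y‖

/-- The norm of `X` is alternatively octahedral: for every finite family of unit vectors and
`ε > 0` there is a unit vector `y` with `max ‖xᵢ + y‖ ‖xᵢ - y‖ > 2 - ε` for all `i`. -/
def AltOctahedralNorm (X : Type*) [NormedAddCommGroup X] [NormedSpace ℝ X] : Prop :=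
  ∀ (n : ℕ) (x : Fin n → X), (∀ i, ‖x i‖ = 1) → ∀ ε : ℝ, 0 < ε →
    ∃ y : X, ‖y‖ = 1 ∧ ∀ i, 2 - ε < max ‖x i + y‖ ‖x i - y‖

/-- The space `c₀` of real sequences vanishing at infinity. -/
abbrev cZero : Type := ZeroAtInftyContinuousMap ℕ ℝ

/-- The space `ℓ∞` of bounded real sequences. -/
abbrev ellInfty : Type := lp (fun _ : ℕ => ℝ) ⊤

/-!
Both norms are sup norms of coordinates, and both spaces contain the indicators of finite sets.
Given unit vectors `xᵢ`, pick coordinates `kᵢ` with `|xᵢ kᵢ|` close to `1`; the indicator `y` of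
`{kᵢ}` then gives `max ‖xᵢ + y‖ ‖xᵢ - y‖ ≥ |xᵢ kᵢ| + 1`. On the other hand, for the unit vector
`e = 𝟙{0}` and any unit vector `y`, one of `y ± e` has norm at most `1` (take the sign opposite
to `y 0`), whereas octahedrality applied to the line spanned by `e` gives `‖y ± e‖ ≥ 3/2`.
-/

theorem abs_add_abs_le_max_abs_add_abs_sub (a b : ℝ) : |a| + |b| ≤ max |a + b| |a - b| := by
  have h₁ := le_abs_self (a + b)
  have h₂ := neg_le_abs (a + b)
  have h₃ := le_abs_self (a - b)
  have h₄ := neg_le_abs (a - b)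
  rcases le_total 0 a with ha | ha <;> rcases le_total 0 b with hb | hb <;>
    simp only [abs_of_nonneg, abs_of_nonpos, ha, hb, le_max_iff] <;> first
    | (left; linarith) | (right; linarith)

theorem not_octahedralNorm_of_min_norm_add_norm_sub_le_one {X : Type*} [NormedAddCommGroup X]
    [NormedSpace ℝ X] (e : X) (he : ‖e‖ = 1) (h : ∀ y : X, ‖y‖ = 1 → min ‖y + e‖ ‖y - e‖ ≤ 1) :
    ¬ OctahedralNorm X := by
  intro hX
  obtain ⟨y, hy, hoct⟩ := hX (ℝ ∙ e) inferInstance (1 / 4) (by norm_num)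
  have hplus := hoct e (Submodule.mem_span_singleton_self e) 1
  have hminus := hoct (-e) (Submodule.neg_mem _ (Submodule.mem_span_singleton_self e)) 1
  rw [one_smul, add_comm e y] at hplus
  rw [one_smul, neg_add_eq_sub, norm_neg] at hminus
  rw [he, abs_one] at hplus hminus
  rcases min_le_iff.1 (h y hy) with hle | hle <;> linarith

section SupNorm

variable {X ι : Type*} [NormedAddCommGroup X]

def IsSupNormCoordinates (ev : X →+ ι → ℝ) : Prop :=
  ∀ (f : X) (C : ℝ), 0 ≤ C → (‖f‖ ≤ C ↔ ∀ k, |ev f k| ≤ C)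

namespace IsSupNormCoordinates

variable {ev : X →+ ι → ℝ}

theorem abs_apply_le_norm (hev : IsSupNormCoordinates ev) (f : X) (k : ι) : |ev f k| ≤ ‖f‖ :=
  (hev f ‖f‖ (norm_nonneg f)).1 le_rfl k

theorem exists_lt_abs_apply [Nonempty ι] (hev : IsSupNormCoordinates ev) (f : X) {r : ℝ}
    (hr : r < ‖f‖) : ∃ k, r < |ev f k| := by
  by_contra! h
  rcases lt_or_ge r 0 with hr₀ | hr₀
  · exact (hr₀.trans_le (abs_nonneg _)).not_ge (h (Classical.arbitrary ι))
  · exact hr.not_ge ((hev f r hr₀).2 h)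

theorem norm_eq_one_of_apply_eq_indicator (hev : IsSupNormCoordinates ev) {S : Set ι}
    {i : ι} (hi : i ∈ S) {y : X} (hy : ev y = S.indicator 1) : ‖y‖ = 1 := by
  refine le_antisymm ((hev y 1 zero_le_one).2 fun k => ?_) ?_
  · by_cases hk : k ∈ S <;> simp [hy, hk]
  · simpa [hy, hi] using hev.abs_apply_le_norm y i

theorem norm_sub_le_one_of_apply_eq_indicator (hev : IsSupNormCoordinates ev) {i : ι} {e : X}
    (he : ev e = Set.indicator {i} 1) {y : X} (hy : ‖y‖ ≤ 1)
    (hyi : 0 ≤ ev y i) : ‖y - e‖ ≤ 1 := by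
  refine (hev _ 1 zero_le_one).2 fun k => ?_
  have hyk : |ev y k| ≤ 1 := (hev.abs_apply_le_norm y k).trans hy
  rw [map_sub, Pi.sub_apply, he]
  by_cases hk : k = i
  · subst hk
    rw [abs_le] at hyk ⊢
    simp only [Set.indicator_of_mem (Set.mem_singleton k), Pi.one_apply]
    constructor <;> linarith
  · simpa [hk] using hyk

variable [NormedSpace ℝ X] [Nonempty ι]

theorem altOctahedralNorm (hev : IsSupNormCoordinates ev)
    (hind : ∀ S : Set ι, S.Finite → ∃ y : X, ev y = S.indicator 1) :
    AltOctahedralNorm X := by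
  intro n x hx ε hε
  choose k hk using fun i => hev.exists_lt_abs_apply (x i) (r := 1 - ε / 2) (by linarith [hx i])
  obtain ⟨y, hy⟩ := hind _ ((Set.finite_range k).insert (Classical.arbitrary ι))
  refine ⟨y, hev.norm_eq_one_of_apply_eq_indicator (Set.mem_insert _ _) hy, fun i => ?_⟩
  have hyk : ev y (k i) = 1 := by simp [hy]
  calc 2 - ε < |ev (x i) (k i)| + |ev y (k i)| := by rw [hyk, abs_one]; linarith [hk i]
    _ ≤ max |ev (x i) (k i) + ev y (k i)| |ev (x i) (k i) - ev y (k i)| :=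
      abs_add_abs_le_max_abs_add_abs_sub _ _
    _ ≤ max ‖x i + y‖ ‖x i - y‖ := by
      gcongr
      · simpa using hev.abs_apply_le_norm (x i + y) (k i)
      · simpa using hev.abs_apply_le_norm (x i - y) (k i)

theorem not_octahedralNorm (hev : IsSupNormCoordinates ev)
    (hind : ∀ S : Set ι, S.Finite → ∃ y : X, ev y = S.indicator 1) :
    ¬ OctahedralNorm X := by
  let i := Classical.arbitrary ι
  obtain ⟨e, he⟩ := hind {i} (Set.finite_singleton i)
  refine not_octahedralNorm_of_min_norm_add_norm_sub_le_one e
    (hev.norm_eq_one_of_apply_eq_indicator (Set.mem_singleton i) he) fun y hy => ?_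
  rcases le_total 0 (ev y i) with hyi | hyi
  · exact min_le_of_right_le (hev.norm_sub_le_one_of_apply_eq_indicator he hy.le hyi)
  · refine min_le_of_left_le ?_
    rw [← norm_neg, neg_add']
    exact hev.norm_sub_le_one_of_apply_eq_indicator he (by rw [norm_neg, hy])
      (by simpa using hyi)

end IsSupNormCoordinates

end SupNorm

namespace ZeroAtInftyContinuousMap

open scoped ZeroAtInfty

variable {α : Type*} [TopologicalSpace α]

def coeFnAddMonoidHom : C₀(α, ℝ) →+ α → ℝ :=
  AddMonoidHom.mk' (⇑) fun _ _ => rfl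

theorem isSupNormCoordinates : IsSupNormCoordinates (coeFnAddMonoidHom : C₀(α, ℝ) →+ α → ℝ) :=
  fun f _ hC => by
    rw [← norm_toBCF_eq_norm]
    exact BoundedContinuousFunction.norm_le hC

theorem exists_coeFnAddMonoidHom_eq_indicator [DiscreteTopology α] (S : Set α)
    (hS : S.Finite) : ∃ f : C₀(α, ℝ), coeFnAddMonoidHom f = S.indicator 1 :=
  ⟨⟨⟨S.indicator 1, continuous_of_discreteTopology⟩, by
    rw [Filter.cocompact_eq_cofinite]
    refine tendsto_const_nhds.congr' ?_
    filter_upwards [hS.compl_mem_cofinite] with k hk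
    exact (Set.indicator_of_notMem hk 1).symm⟩, rfl⟩

end ZeroAtInftyContinuousMap

namespace lp

variable {α : Type*}

theorem isSupNormCoordinates : IsSupNormCoordinates (lp.coeFnAddMonoidHom (fun _ : α => ℝ) ∞) :=
  fun f _ hC => by
    simp only [coeFnAddMonoidHom_apply, ← Real.norm_eq_abs]
    exact ⟨fun hf k => (norm_apply_le_norm ENNReal.top_ne_zero f k).trans hf,
      norm_le_of_forall_le hC⟩

theorem exists_coeFnAddMonoidHom_eq_indicator (S : Set α) (hS : S.Finite) :
    ∃ f : lp (fun _ : α => ℝ) ∞, coeFnAddMonoidHom _ ∞ f = S.indicator 1 := by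
  have hmem : Memℓp (S.indicator 1 : α → ℝ) ∞ :=
    (memℓp_zero (hS.subset fun _ => Set.mem_of_indicator_ne_zero)).of_exponent_ge zero_le
  exact ⟨⟨S.indicator 1, hmem⟩, rfl⟩

end lp

/-- The norms of `c₀` and `ℓ∞` are alternatively octahedral, but neither norm is octahedral. -/
theorem cZero_ellInfty_altOctahedral_not_octahedral :
    AltOctahedralNorm cZero ∧ AltOctahedralNorm ellInfty ∧
      ¬ OctahedralNorm cZero ∧ ¬ OctahedralNorm ellInfty :=
  ⟨ZeroAtInftyContinuousMap.isSupNormCoordinates.altOctahedralNorm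
      ZeroAtInftyContinuousMap.exists_coeFnAddMonoidHom_eq_indicator,
    lp.isSupNormCoordinates.altOctahedralNorm lp.exists_coeFnAddMonoidHom_eq_indicator,
    ZeroAtInftyContinuousMap.isSupNormCoordinates.not_octahedralNorm
      ZeroAtInftyContinuousMap.exists_coeFnAddMonoidHom_eq_indicator,
    lp.isSupNormCoordinates.not_octahedralNorm lp.exists_coeFnAddMonoidHom_eq_indicator⟩
end
end

section
/- Let X and Y be Banach spaces and let H be a closed subspace of L(X*, Y) containing the elementary tensor operators X ⊗ Y (where x ⊗ y denotes the operator f ↦ f(x)y), such that every T ∈ H is weak*-to-weakly continuous. If the norm of X is alternatively octahedral and the norm of Y is octahedral, then the norm of H is octahedral. -/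
/-!
Given unit operators `T₁, …, Tₙ ∈ H`, their preadjoints produce unit vectors `uᵢ ∈ X` with
`‖Tᵢ f‖ ≳ |f uᵢ|`. Alternative octahedrality of `X` gives a unit `x` and functionals `fᵢ` with
`fᵢ uᵢ ≈ 1` and `|fᵢ x| ≈ 1`; octahedrality of `Y` on the span of the `Tᵢ fᵢ` gives a unit `y`.
Evaluating at `fᵢ` then shows `‖Tᵢ + x ⊗ y‖ ≈ ‖Tᵢ fᵢ‖ + |fᵢ x| ≈ 2`. Since unit spheres of
finite-dimensional subspaces are compact, this finite-set condition implies octahedrality.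
-/

open scoped TensorProduct
open MeasureTheory UniformSpace
open scoped ENNReal

noncomputable section

open NormedSpace Set Submodule

section Octahedral

variable {Z : Type*} [NormedAddCommGroup Z] [NormedSpace ℝ Z]

lemma mul_one_add_le_norm_add_smul {v y : Z} {δ μ : ℝ} (hv : ‖v‖ = 1) (hy : ‖y‖ = 1)
    (h : 2 - δ ≤ ‖v + y‖) (hμ : 0 ≤ μ) : (1 - δ) * (1 + μ) ≤ ‖v + μ • y‖ := by
  have hδ : 0 ≤ δ := by linarith [norm_add_le v y]
  rcases le_total μ 1 with hμ1 | hμ1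
  · have htri := norm_add_le (v + μ • y) ((1 - μ) • y)
    rw [show v + μ • y + (1 - μ) • y = v + y by module] at htri
    rw [norm_smul, hy, Real.norm_of_nonneg (by linarith)] at htri
    nlinarith [mul_nonneg hδ hμ]
  · have htri := norm_add_le (v + μ • y) ((μ - 1) • v)
    rw [show v + μ • y + (μ - 1) • v = μ • (v + y) by module] at htri
    rw [norm_smul, norm_smul, hv, Real.norm_of_nonneg hμ, Real.norm_of_nonneg (by linarith)]
      at htri
    nlinarith [mul_le_mul_of_nonneg_left h hμ]

lemma mul_norm_add_abs_le_norm_add_smul {E : Submodule ℝ Z} {y : Z} {ε : ℝ} (hy : ‖y‖ = 1)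
    (hε : 0 ≤ ε) (h : ∀ u ∈ E, ‖u‖ = 1 → ∀ μ : ℝ, 0 ≤ μ → (1 - ε) * (1 + μ) ≤ ‖u + μ • y‖) :
    ∀ x ∈ E, ∀ l : ℝ, (1 - ε) * (‖x‖ + |l|) ≤ ‖x + l • y‖ := by
  have hpos : ∀ x ∈ E, ∀ μ : ℝ, 0 ≤ μ → (1 - ε) * (‖x‖ + μ) ≤ ‖x + μ • y‖ := by
    intro x hx μ hμ
    rcases eq_or_ne x 0 with rfl | hx0
    · rw [norm_zero, zero_add, zero_add, norm_smul, hy, Real.norm_of_nonneg hμ]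
      nlinarith
    have hxpos : 0 < ‖x‖ := norm_pos_iff.2 hx0
    have hunit := h (‖x‖⁻¹ • x) (E.smul_mem _ hx) (norm_smul_inv_norm hx0) (μ / ‖x‖)
      (by positivity)
    calc (1 - ε) * (‖x‖ + μ) = ‖x‖ * ((1 - ε) * (1 + μ / ‖x‖)) := by field_simp
      _ ≤ ‖x‖ * ‖‖x‖⁻¹ • x + (μ / ‖x‖) • y‖ := by gcongr
      _ = ‖‖x‖ • (‖x‖⁻¹ • x + (μ / ‖x‖) • y)‖ := by rw [norm_smul_of_nonneg (norm_nonneg x)]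
      _ = ‖x + μ • y‖ := by
        rw [smul_add, smul_inv_smul₀ hxpos.ne', smul_smul, mul_div_cancel₀ _ hxpos.ne']
  intro x hx l
  rcases le_total 0 l with hl | hl
  · simpa only [abs_of_nonneg hl] using hpos x hx l hl
  · have := hpos (-x) (E.neg_mem hx) (-l) (neg_nonneg.2 hl)
    rw [abs_of_nonpos hl]
    rwa [norm_neg, neg_smul, ← neg_add, norm_neg] at this

theorem octahedralNorm_of_forall_finite
    (h : ∀ s : Set Z, s.Finite → (∀ z ∈ s, ‖z‖ = 1) → ∀ δ : ℝ, 0 < δ →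
      ∃ y : Z, ‖y‖ = 1 ∧ ∀ z ∈ s, 2 - δ ≤ ‖z + y‖) :
    OctahedralNorm Z := by
  intro E hE ε hε
  have hK : IsCompact ((↑) '' Metric.sphere (0 : E) 1 : Set Z) :=
    (isCompact_sphere 0 1).image continuous_subtype_val
  obtain ⟨t, htK, ht, hcover⟩ := hK.finite_cover_balls (half_pos hε)
  have ht1 : ∀ v ∈ t, ‖v‖ = 1 := by
    intro v hv
    obtain ⟨w, hw, rfl⟩ := htK hv
    simpa using hw
  obtain ⟨y, hy, hyt⟩ := h t ht ht1 (ε / 2) (half_pos hε)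
  refine ⟨y, hy, mul_norm_add_abs_le_norm_add_smul hy hε.le fun u hu hu1 μ hμ => ?_⟩
  have huK : u ∈ ((↑) '' Metric.sphere (0 : E) 1 : Set Z) := ⟨⟨u, hu⟩, by simpa using hu1, rfl⟩
  obtain ⟨v, hv, huv⟩ := mem_iUnion₂.1 (hcover huK)
  have hnear := mul_one_add_le_norm_add_smul (ht1 v hv) hy (hyt v hv) hμ
  have htri := norm_le_norm_add_norm_sub' (v + μ • y) (u + μ • y)
  rw [add_sub_add_right_eq_sub] at htri
  rw [← dist_eq_norm, dist_comm] at htri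
  nlinarith [Metric.mem_ball.1 huv]

end Octahedral

section Dual

variable {X : Type*} [NormedAddCommGroup X] [NormedSpace ℝ X]

lemma exists_dual_lt_of_lt_norm_add {u v : X} {δ : ℝ} (hu : ‖u‖ ≤ 1) (hv : ‖v‖ ≤ 1)
    (h : 2 - δ < ‖u + v‖) : ∃ f : StrongDual ℝ X, ‖f‖ ≤ 1 ∧ 1 - δ < f u ∧ 1 - δ < f v := by
  obtain ⟨f, hf, hfuv⟩ := exists_dual_vector'' ℝ (u + v)
  have hbound : ∀ w : X, ‖w‖ ≤ 1 → f w ≤ 1 := fun w hw =>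
    (le_abs_self _).trans ((f.le_of_opNorm_le hf w).trans (by simpa using hw))
  have : f u + f v = ‖u + v‖ := by rw [← map_add]; exact_mod_cast hfuv
  exact ⟨f, hf, by linarith [hbound v hv], by linarith [hbound u hu]⟩

lemma exists_dual_lt_of_lt_max_norm_add_sub {u v : X} {δ : ℝ} (hu : ‖u‖ ≤ 1) (hv : ‖v‖ ≤ 1)
    (h : 2 - δ < max ‖u + v‖ ‖u - v‖) :
    ∃ f : StrongDual ℝ X, ‖f‖ ≤ 1 ∧ 1 - δ < f u ∧ 1 - δ < |f v| := by
  rcases lt_max_iff.1 h with h | h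
  · obtain ⟨f, hf, hfu, hfv⟩ := exists_dual_lt_of_lt_norm_add hu hv h
    exact ⟨f, hf, hfu, hfv.trans_le (le_abs_self _)⟩
  · rw [sub_eq_add_neg u v] at h
    obtain ⟨f, hf, hfu, hfv⟩ := exists_dual_lt_of_lt_norm_add hu (by rwa [norm_neg]) h
    rw [map_neg] at hfv
    exact ⟨f, hf, hfu, hfv.trans_le (neg_le_abs _)⟩

theorem AltOctahedralNorm.exists_of_finite (hX : AltOctahedralNorm X) {ι : Type*} [Finite ι]
    (x : ι → X) (hx : ∀ i, ‖x i‖ = 1) {ε : ℝ} (hε : 0 < ε) :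
    ∃ y : X, ‖y‖ = 1 ∧ ∀ i, 2 - ε < max ‖x i + y‖ ‖x i - y‖ := by
  obtain ⟨n, ⟨e⟩⟩ := Finite.exists_equiv_fin ι
  obtain ⟨y, hy, hxy⟩ := hX n (x ∘ e.symm) (fun _ => hx _) ε hε
  exact ⟨y, hy, fun i => by simpa using hxy (e i)⟩

variable {Y : Type*} [NormedAddCommGroup Y] [NormedSpace ℝ Y]

/-- The vector is `T* g` normalized, for `g` norming some `T f₀` with `‖f₀‖ < 1`, `‖T f₀‖ > r`. -/
theorem exists_norm_eq_one_mul_norm_apply_le (T : StrongDual ℝ X →L[ℝ] Y)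
    (hT : ∀ g : StrongDual ℝ Y, ∃ x : X, ∀ f : StrongDual ℝ X, g (T f) = f x)
    {r : ℝ} (hr₀ : 0 ≤ r) (hr : r < ‖T‖) :
    ∃ u : X, ‖u‖ = 1 ∧ ∀ f : StrongDual ℝ X, r * ‖f u‖ ≤ ‖T f‖ := by
  obtain ⟨f₀, hf₀, hrf₀⟩ := T.exists_lt_apply_of_lt_opNorm hr
  obtain ⟨g, hg, hgf₀⟩ := exists_dual_vector'' ℝ (T f₀)
  obtain ⟨x, hx⟩ := hT g
  have hxT : ∀ f : StrongDual ℝ X, ‖f x‖ ≤ ‖T f‖ := fun f => by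
    simpa [← hx] using g.le_of_opNorm_le hg (T f)
  have hrx : r < ‖x‖ :=
    calc r < ‖T f₀‖ := hrf₀
      _ = f₀ x := by rw [← hx]; exact_mod_cast hgf₀.symm
      _ ≤ ‖x‖ := (le_abs_self _).trans ((f₀.le_of_opNorm_le hf₀.le x).trans (one_mul _).le)
  have hx₀ : x ≠ 0 := norm_pos_iff.1 (hr₀.trans_lt hrx)
  refine ⟨‖x‖⁻¹ • x, norm_smul_inv_norm hx₀, fun f => ?_⟩
  calc r * ‖f (‖x‖⁻¹ • x)‖ ≤ ‖x‖ * ‖f (‖x‖⁻¹ • x)‖ := by gcongr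
    _ = ‖f x‖ := by
      rw [map_smul, norm_smul, norm_inv, norm_norm, mul_inv_cancel_left₀ (norm_ne_zero_iff.2 hx₀)]
    _ ≤ ‖T f‖ := hxT f

lemma norm_inclusionInDoubleDual_smulRight (x : X) (y : Y) :
    ‖(inclusionInDoubleDual ℝ X x).smulRight y‖ = ‖x‖ * ‖y‖ := by
  rw [ContinuousLinearMap.norm_smulRight_apply]
  exact congrArg (· * ‖y‖) ((inclusionInDoubleDualLi ℝ (E := X)).norm_map x)

theorem exists_le_norm_add_smulRight (hX : AltOctahedralNorm X) (hY : OctahedralNorm Y)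
    {ι : Type*} [Finite ι] (T : ι → StrongDual ℝ X →L[ℝ] Y) (hT1 : ∀ i, ‖T i‖ = 1)
    (hT : ∀ i, ∀ g : StrongDual ℝ Y, ∃ x : X, ∀ f : StrongDual ℝ X, g (T i f) = f x)
    {η : ℝ} (hη : 0 < η) (hη₁ : η < 1) :
    ∃ x : X, ∃ y : Y, ‖x‖ = 1 ∧ ‖y‖ = 1 ∧ ∀ i, (1 - η) * ((1 - η) * (1 - η) + (1 - η)) ≤
      ‖T i + (inclusionInDoubleDual ℝ X x).smulRight y‖ := by
  choose u hu1 hTu using fun i => exists_norm_eq_one_mul_norm_apply_le (T i) (hT i)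
    (r := 1 - η) (by linarith) (by linarith [hT1 i])
  obtain ⟨x, hx1, hux⟩ := hX.exists_of_finite u hu1 hη
  choose f hf1 hfu hfx using fun i =>
    exists_dual_lt_of_lt_max_norm_add_sub (hu1 i).le hx1.le (hux i)
  obtain ⟨y, hy1, hy⟩ := hY (span ℝ (range fun i => T i (f i)))
    (FiniteDimensional.span_of_finite ℝ (finite_range _)) η hη
  refine ⟨x, y, hx1, hy1, fun i => ?_⟩
  have hTf : (1 - η) * (1 - η) ≤ ‖T i (f i)‖ :=
    calc (1 - η) * (1 - η) ≤ (1 - η) * ‖f i (u i)‖ := by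
          gcongr
          exact (hfu i).le.trans (le_abs_self _)
      _ ≤ ‖T i (f i)‖ := hTu i (f i)
  calc (1 - η) * ((1 - η) * (1 - η) + (1 - η)) ≤ (1 - η) * (‖T i (f i)‖ + |f i x|) := by
        gcongr
        exact (hfx i).le
    _ ≤ ‖T i (f i) + f i x • y‖ := hy _ (subset_span ⟨i, rfl⟩) _
    _ ≤ ‖T i + (inclusionInDoubleDual ℝ X x).smulRight y‖ :=
      (T i + (inclusionInDoubleDual ℝ X x).smulRight y).unit_le_opNorm _ (hf1 i)

end Dual

theorem octahedral_of_altOctahedral_octahedral_general (X Y : Type*)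
    [NormedAddCommGroup X] [NormedSpace ℝ X]
    [NormedAddCommGroup Y] [NormedSpace ℝ Y]
    (H : Submodule ℝ (StrongDual ℝ X →L[ℝ] Y))
    (htensors : ∀ (x : X) (y : Y),
      (NormedSpace.inclusionInDoubleDual ℝ X x).smulRight y ∈ H)
    (hweak : ∀ T ∈ H, ∀ g : StrongDual ℝ Y, ∃ x : X,
      ∀ f : StrongDual ℝ X, g (T f) = f x)
    (hX : AltOctahedralNorm X) (hY : OctahedralNorm Y) :
    @OctahedralNorm ↥H
      (Submodule.normedAddCommGroup (E := StrongDual ℝ X →L[ℝ] Y) H)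
      (Submodule.normedSpace (E := StrongDual ℝ X →L[ℝ] Y) H) := by
  let _ : NormedAddCommGroup H := Submodule.normedAddCommGroup (E := StrongDual ℝ X →L[ℝ] Y) H
  let _ : NormedSpace ℝ H := Submodule.normedSpace (E := StrongDual ℝ X →L[ℝ] Y) H
  refine octahedralNorm_of_forall_finite fun s hs hs1 δ hδ => ?_
  have := hs.to_subtype
  obtain ⟨η, hη, hη₁, hηδ⟩ : ∃ η : ℝ, 0 < η ∧ η ≤ 1 / 5 ∧ 5 * η ≤ δ :=
    ⟨min δ 1 / 5, by positivity, by linarith [min_le_right δ 1], by linarith [min_le_left δ 1]⟩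
  obtain ⟨x, y, hx1, hy1, hxy⟩ := exists_le_norm_add_smulRight hX hY (fun T : s => T.1.1)
    (fun T => hs1 _ T.2) (fun T => hweak _ T.1.2) hη (by linarith)
  refine ⟨⟨_, htensors x y⟩,
    (norm_inclusionInDoubleDual_smulRight x y).trans (by rw [hx1, hy1, one_mul]),
    fun T hT => le_trans ?_ (hxy ⟨T, hT⟩)⟩
  -- `(1 - η)³ + (1 - η)² ≥ 2 - 5η` for `η ≤ 1/5`
  nlinarith [mul_nonneg (sq_nonneg η) (by linarith : (0 : ℝ) ≤ 4 - η)]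

/-- Let `H` be a closed subspace of `L(X*, Y)` containing the elementary tensors
`x ⊗ y : f ↦ f(x) y` and consisting of weak*-to-weakly continuous operators (equivalently,
operators whose adjoint maps `Y*` into `X`). If the norm of `X` is alternatively octahedral and
the norm of `Y` is octahedral, then the norm of `H` is octahedral. -/
theorem octahedral_of_altOctahedral_octahedral (X Y : Type*)
    [NormedAddCommGroup X] [NormedSpace ℝ X] [CompleteSpace X]
    [NormedAddCommGroup Y] [NormedSpace ℝ Y] [CompleteSpace Y]
    (H : Submodule ℝ (StrongDual ℝ X →L[ℝ] Y))
    (hHclosed : IsClosed (H : Set (StrongDual ℝ X →L[ℝ] Y)))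
    (htensors : ∀ (x : X) (y : Y),
      (NormedSpace.inclusionInDoubleDual ℝ X x).smulRight y ∈ H)
    (hweak : ∀ T ∈ H, ∀ g : StrongDual ℝ Y, ∃ x : X,
      ∀ f : StrongDual ℝ X, g (T f) = f x)
    (hX : AltOctahedralNorm X) (hY : OctahedralNorm Y) :
    @OctahedralNorm ↥H
      (Submodule.normedAddCommGroup (E := StrongDual ℝ X →L[ℝ] Y) H)
      (Submodule.normedSpace (E := StrongDual ℝ X →L[ℝ] Y) H) :=
  octahedral_of_altOctahedral_octahedral_general X Y H htensors hweak hX hY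
end
end

section
/- Let X be a Banach space and Z a closed subspace of X that is an almost isometric ideal in X. If for every finite collection z_1, …, z_n ∈ S_Z there exists v ∈ S_X such that ‖z_i + v‖ = ‖z_i‖ + ‖v‖ for all i ∈ {1, …, n}, then the norm of Z is octahedral. -/
open scoped TensorProduct
open MeasureTheory UniformSpace
open scoped ENNReal

noncomputable section

/-- A (closed) subspace `Z` of `X` is an almost isometric ideal in `X`: for each `ε > 0` and
each finite-dimensional subspace `E ⊆ X` there is a linear map `T : E → Z ⊆ X` fixing `E ∩ Z`
with `(1 - ε) ‖e‖ ≤ ‖T e‖ ≤ (1 + ε) ‖e‖`. -/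
def IsAiIdeal {X : Type*} [NormedAddCommGroup X] [NormedSpace ℝ X] (Z : Submodule ℝ X) : Prop :=
  ∀ ε : ℝ, 0 < ε → ∀ E : Submodule ℝ X, FiniteDimensional ℝ E →
    ∃ T : E →ₗ[ℝ] X, (∀ e : E, T e ∈ Z) ∧ (∀ e : E, (e : X) ∈ Z → T e = e) ∧
      ∀ e : E, (1 - ε) * ‖(e : X)‖ ≤ ‖T e‖ ∧ ‖T e‖ ≤ (1 + ε) * ‖(e : X)‖

/-!
A unit vector `v` with `‖z + v‖ = ‖z‖ + ‖v‖` for every point `z` of a finite `δ`-net of the unit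
sphere of `E` already satisfies `‖x + l v‖ ≥ (1 - δ)(‖x‖ + |l|)` on `E`, by positive homogeneity
and the symmetry `x ↦ -x`. Such a `v` lies in `X`, not in `Z`; the ai-ideal operator on
`E + ℝ v` fixes `E` and moves `v` into `Z` while distorting norms by at most a factor `1 ± δ`,
so the normalised image of `v` is the required direction in `Z`.
-/

section NormedSpace

variable {X : Type*} [NormedAddCommGroup X] [NormedSpace ℝ X]

def IsOctahedralWitness (E : Submodule ℝ X) (ε : ℝ) (y : X) : Prop :=
  ∀ x ∈ E, ∀ l : ℝ, (1 - ε) * (‖x‖ + |l|) ≤ ‖x + l • y‖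

theorem norm_smul_add_smul_of_norm_add_eq {a v : X} (h : ‖a + v‖ = ‖a‖ + ‖v‖) {s t : ℝ}
    (hs : 0 ≤ s) (ht : 0 ≤ t) : ‖s • a + t • v‖ = s * ‖a‖ + t * ‖v‖ := by
  refine le_antisymm ((norm_add_le _ _).trans (by simp [norm_smul, abs_of_nonneg, hs, ht])) ?_
  rcases le_total s t with hst | hts
  · have := norm_sub_norm_le (t • (a + v)) ((t - s) • a)
    rw [norm_smul, norm_smul, h, Real.norm_of_nonneg ht, Real.norm_of_nonneg (sub_nonneg.2 hst),
      show t • (a + v) - (t - s) • a = s • a + t • v by module] at this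
    linarith
  · have := norm_sub_norm_le (s • (a + v)) ((s - t) • v)
    rw [norm_smul, norm_smul, h, Real.norm_of_nonneg hs, Real.norm_of_nonneg (sub_nonneg.2 hts),
      show s • (a + v) - (s - t) • v = s • a + t • v by module] at this
    linarith

theorem IsOctahedralWitness.of_sphere {E : Submodule ℝ X} {δ : ℝ} {v : X} (hv : ‖v‖ = 1)
    (hδ : 0 ≤ δ) (h : ∀ u ∈ E, ‖u‖ = 1 → ∀ l : ℝ, 0 ≤ l → (1 - δ) * (1 + l) ≤ ‖u + l • v‖) :
    IsOctahedralWitness E δ v := by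
  have nonneg : ∀ x ∈ E, ∀ l : ℝ, 0 ≤ l → (1 - δ) * (‖x‖ + l) ≤ ‖x + l • v‖ := by
    intro x hx l hl
    rcases eq_or_ne x 0 with rfl | hx0
    · simp only [norm_zero, zero_add, norm_smul, hv, Real.norm_of_nonneg hl]
      nlinarith
    have hr : 0 < ‖x‖ := norm_pos_iff.2 hx0
    have hu := h (‖x‖⁻¹ • x) (E.smul_mem _ hx) (by simp [norm_smul, hr.ne']) (l / ‖x‖)
      (by positivity)
    calc (1 - δ) * (‖x‖ + l) = ‖x‖ * ((1 - δ) * (1 + l / ‖x‖)) := by field_simp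
      _ ≤ ‖x‖ * ‖‖x‖⁻¹ • x + (l / ‖x‖) • v‖ := by gcongr
      _ = ‖x + l • v‖ := by
        rw [← Real.norm_of_nonneg hr.le, ← norm_smul, Real.norm_of_nonneg hr.le]
        congr 1
        rw [smul_add, smul_smul, smul_smul, mul_inv_cancel₀ hr.ne', mul_div_cancel₀ _ hr.ne',
          one_smul]
  intro x hx l
  rcases le_total 0 l with hl | hl
  · simpa only [abs_of_nonneg hl] using nonneg x hx l hl
  · have := nonneg (-x) (E.neg_mem hx) (-l) (neg_nonneg.2 hl)
    rwa [norm_neg, neg_smul, ← neg_add, norm_neg, ← abs_of_nonpos hl] at this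

theorem exists_fin_forall_isOctahedralWitness (E : Submodule ℝ X) [FiniteDimensional ℝ E]
    {δ : ℝ} (hδ : 0 < δ) :
    ∃ (n : ℕ) (z : Fin n → X), (∀ i, z i ∈ E ∧ ‖z i‖ = 1) ∧
      ∀ v : X, ‖v‖ = 1 → (∀ i, ‖z i + v‖ = ‖z i‖ + ‖v‖) → IsOctahedralWitness E δ v := by
  have hS : IsCompact ((↑) '' Metric.sphere (0 : E) 1 : Set X) :=
    (isCompact_sphere 0 1).image continuous_subtype_val
  obtain ⟨t, htS, htfin, hcover⟩ := hS.finite_cover_balls hδ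
  obtain ⟨n, z, -, rfl⟩ := htfin.fin_param
  have hz : ∀ i, z i ∈ E ∧ ‖z i‖ = 1 := fun i => by
    obtain ⟨u, hu, hzu⟩ := htS ⟨i, rfl⟩
    exact hzu ▸ ⟨u.2, by simpa using hu⟩
  refine ⟨n, z, hz, fun v hv hzv => IsOctahedralWitness.of_sphere hv hδ.le ?_⟩
  intro u hu hu1 l hl
  obtain ⟨_, ⟨i, rfl⟩, hui⟩ := Set.mem_iUnion₂.1 (hcover ⟨⟨u, hu⟩, by simpa using hu1, rfl⟩)
  have hzl : ‖z i + l • v‖ = 1 + l := by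
    simpa [(hz i).2, hv] using norm_smul_add_smul_of_norm_add_eq (hzv i) zero_le_one hl
  have hdist : ‖z i - u‖ < δ := by rw [← dist_eq_norm, dist_comm]; exact hui
  calc (1 - δ) * (1 + l) ≤ ‖z i + l • v‖ - ‖z i - u‖ := by nlinarith
    _ ≤ ‖z i + l • v - (z i - u)‖ := norm_sub_norm_le _ _
    _ = ‖u + l • v‖ := by congr 1; abel

theorem IsAiIdeal.exists_isOctahedralWitness {Z E : Submodule ℝ X} (hZ : IsAiIdeal Z)
    (hEZ : E ≤ Z) [FiniteDimensional ℝ E] {δ : ℝ} (hδ : 0 < δ) (hδ1 : δ < 1) {v : X}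
    (hv : ‖v‖ = 1) (hvE : IsOctahedralWitness E δ v) :
    ∃ y ∈ Z, ‖y‖ = 1 ∧ IsOctahedralWitness E (3 * δ) y := by
  obtain ⟨T, hTZ, hTfix, hTnorm⟩ := hZ δ hδ (E ⊔ ℝ ∙ v) inferInstance
  let vF : ↥(E ⊔ ℝ ∙ v) := ⟨v, Submodule.mem_sup_right (Submodule.mem_span_singleton_self v)⟩
  set w := T vF
  have hw : 1 - δ ≤ ‖w‖ ∧ ‖w‖ ≤ 1 + δ := by simpa [vF, hv] using hTnorm vF
  have hw0 : 0 < ‖w‖ := by linarith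
  refine ⟨‖w‖⁻¹ • w, Z.smul_mem _ (hTZ vF), by simp [norm_smul, hw0.ne'], fun x hx l => ?_⟩
  let xF : ↥(E ⊔ ℝ ∙ v) := ⟨x, Submodule.mem_sup_left hx⟩
  have hT : T (xF + (l / ‖w‖) • vF) = x + l • ‖w‖⁻¹ • w := by
    rw [map_add, map_smul, hTfix xF (hEZ hx), smul_smul, div_eq_mul_inv]
  have key := (hTnorm (xF + (l / ‖w‖) • vF)).1
  rw [hT] at key
  have hl : |l| / (1 + δ) ≤ |l / ‖w‖| := by
    rw [abs_div, abs_of_pos hw0]; gcongr; exact hw.2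
  calc (1 - 3 * δ) * (‖x‖ + |l|) ≤ (1 - δ) * ((1 - δ) * (‖x‖ + |l| / (1 + δ))) := by
        -- `(1 - δ)² - (1 - 3δ)(1 + δ) = 4δ²`
        set q := |l| / (1 + δ)
        have hq : |l| = q * (1 + δ) := (div_mul_cancel₀ _ (by linarith)).symm
        rw [hq]
        nlinarith [mul_nonneg hδ.le (norm_nonneg x),
          mul_nonneg (sq_nonneg δ) (by positivity : 0 ≤ q)]
    _ ≤ (1 - δ) * ((1 - δ) * (‖x‖ + |l / ‖w‖|)) := by gcongr
    _ ≤ (1 - δ) * ‖x + (l / ‖w‖) • v‖ := mul_le_mul_of_nonneg_left (hvE x hx _) (by linarith)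
    _ ≤ _ := key

end NormedSpace

theorem octahedral_of_aiIdeal_general (X : Type*) [NormedAddCommGroup X] [NormedSpace ℝ X]
    (Z : Submodule ℝ X)
    (hZai : IsAiIdeal Z)
    (h : ∀ (n : ℕ) (z : Fin n → Z), (∀ i, ‖z i‖ = 1) →
      ∃ v : X, ‖v‖ = 1 ∧ ∀ i, ‖(z i : X) + v‖ = ‖(z i : X)‖ + ‖v‖) :
    OctahedralNorm ↥Z := by
  intro E _ ε hε
  set δ := min (ε / 3) (1 / 2)
  have hδ : 0 < δ := lt_min (by linarith) one_half_pos
  have hEZ : E.map Z.subtype ≤ Z := Z.map_subtype_le E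
  obtain ⟨n, z, hz, hzv⟩ := exists_fin_forall_isOctahedralWitness (E.map Z.subtype) hδ
  obtain ⟨v, hv, hv_add⟩ := h n (fun i => ⟨z i, hEZ (hz i).1⟩) fun i => (hz i).2
  obtain ⟨y, hyZ, hy, hyE⟩ := hZai.exists_isOctahedralWitness hEZ hδ
    ((min_le_right _ _).trans_lt one_half_lt_one) hv (hzv v hv hv_add)
  refine ⟨⟨y, hyZ⟩, hy, fun x hx l => ?_⟩
  calc (1 - ε) * (‖x‖ + |l|) ≤ (1 - 3 * δ) * (‖x‖ + |l|) := by
        gcongr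
        linarith [min_le_left (ε / 3) (1 / 2)]
    _ ≤ ‖x + l • ⟨y, hyZ⟩‖ := hyE x (Submodule.mem_map_of_mem hx) l

/-- Let `Z` be a closed subspace of `X` which is an almost isometric ideal in `X`. If for every
finite collection `z₁, …, zₙ` of unit vectors of `Z` there exists a unit vector `v ∈ X` with
`‖zᵢ + v‖ = ‖zᵢ‖ + ‖v‖` for all `i`, then the norm of `Z` is octahedral. -/
theorem octahedral_of_aiIdeal (X : Type*) [NormedAddCommGroup X] [NormedSpace ℝ X]
    [CompleteSpace X] (Z : Submodule ℝ X) (hZclosed : IsClosed (Z : Set X))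
    (hZai : IsAiIdeal Z)
    (h : ∀ (n : ℕ) (z : Fin n → Z), (∀ i, ‖z i‖ = 1) →
      ∃ v : X, ‖v‖ = 1 ∧ ∀ i, ‖(z i : X) + v‖ = ‖(z i : X)‖ + ‖v‖) :
    OctahedralNorm ↥Z :=
  octahedral_of_aiIdeal_general X Z hZai h
end
end
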